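/- Let r⁺, r⁻ satisfy the partial cocycle identities (CCI⁺), (CCI⁻) and the balance identity (Bal). Then for all configurations γ⁺, γ⁻ ⊆ X, all disjoint finite configurations η₁⁺, η₂⁺, and all disjoint finite configurations η₁⁻, η₂⁻: R(γ⁺, γ⁻, η₁⁺ ∪ η₂⁺, η₁⁻ ∪ η₂⁻) = R(γ⁺∪η₂⁺, γ⁻∪η₂⁻, η₁⁺, η₁⁻)·R(γ⁺, γ⁻, η₂⁺, η₂⁻). -/
import Mathlib


open scoped NNReal

/-- Iterated product of the partial relative energy density `r⁺` along an
enumeration (list) of a finite configuration. -/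
def RplusL {X : Type*} (rp : Set X → Set X → X → ℝ≥0) (γm : Set X) :
    Set X → List X → ℝ≥0
  | _, [] => 1
  | γp, x :: xs => rp γp γm x * RplusL rp γm (insert x γp) xs

/-- `R⁺(γ⁺, γ⁻, η⁺)`: the iterated product of `r⁺` along a (fixed, arbitrary)
duplicate-free enumeration of the finite configuration `η⁺`; under (CCI⁺) it is
independent of the enumeration. -/
noncomputable def Rplus {X : Type*} (rp : Set X → Set X → X → ℝ≥0)
    (γp γm : Set X) (η : Finset X) : ℝ≥0 :=
  RplusL rp γm γp η.toList

/-- Iterated product of the partial relative energy density `r⁻` along an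
enumeration (list) of a finite configuration. -/
def RminusL {X : Type*} (rm : Set X → Set X → X → ℝ≥0) (γp : Set X) :
    Set X → List X → ℝ≥0
  | _, [] => 1
  | γm, y :: ys => rm γp γm y * RminusL rm γp (insert y γm) ys

/-- `R⁻(γ⁺, γ⁻, η⁻)`: the iterated product of `r⁻` along a (fixed, arbitrary)
duplicate-free enumeration of the finite configuration `η⁻`; under (CCI⁻) it is
independent of the enumeration. -/
noncomputable def Rminus {X : Type*} (rm : Set X → Set X → X → ℝ≥0)
    (γp γm : Set X) (η : Finset X) : ℝ≥0 :=
  RminusL rm γp γm η.toList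

/-- `R(γ⁺, γ⁻, η⁺, η⁻) := R⁺(γ⁺, γ⁻∪η⁻, η⁺)·R⁻(γ⁺, γ⁻, η⁻)`. -/
noncomputable def Rfull {X : Type*} (rp rm : Set X → Set X → X → ℝ≥0)
    (γp γm : Set X) (ηp ηm : Finset X) : ℝ≥0 :=
  Rplus rp γp (γm ∪ ↑ηm) ηp * Rminus rm γp γm ηm


section Aux
variable {X : Type*} (rp rm : Set X → Set X → X → ℝ≥0)

/-- Permutation invariance of `RplusL` under (CCI⁺). -/
lemma RplusL_perm
    (hCCIp : ∀ (γp γm : Set X) (x x' : X),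
      rp (insert x' γp) γm x * rp γp γm x' = rp (insert x γp) γm x' * rp γp γm x)
    (γm : Set X) {l₁ l₂ : List X} (h : l₁.Perm l₂) :
    ∀ γp, RplusL rp γm γp l₁ = RplusL rp γm γp l₂ := by
  induction h with
  | nil => intro _; rfl
  | cons x _ ih => intro γp; simp only [RplusL, ih]
  | swap x y l =>
      intro γp
      simp only [RplusL, Set.insert_comm, ← mul_assoc]
      congr 1
      have := hCCIp γp γm x y
      calc rp γp γm y * rp (insert y γp) γm x
          = rp (insert y γp) γm x * rp γp γm y := mul_comm _ _
        _ = rp (insert x γp) γm y * rp γp γm x := this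
        _ = rp γp γm x * rp (insert x γp) γm y := mul_comm _ _
  | trans _ _ ih₁ ih₂ => intro γp; rw [ih₁, ih₂]

lemma RplusL_append (γm : Set X) :
    ∀ (l₁ l₂ : List X) (γp : Set X),
      RplusL rp γm γp (l₁ ++ l₂)
        = RplusL rp γm γp l₁ * RplusL rp γm (γp ∪ {a | a ∈ l₁}) l₂ := by
  intro l₁
  induction l₁ with
  | nil =>
      intro l₂ γp
      have : γp ∪ {a : X | a ∈ ([] : List X)} = γp := by ext a; simp
      simp [RplusL, this]
  | cons x xs ih =>
      intro l₂ γp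
      have hset : insert x γp ∪ {a : X | a ∈ xs} = γp ∪ {a : X | a ∈ x :: xs} := by
        ext a; simp; tauto
      show rp γp γm x * RplusL rp γm (insert x γp) (xs ++ l₂) = _
      rw [ih l₂ (insert x γp), hset]
      simp only [RplusL, mul_assoc]

/-- `RminusL` is `RplusL` with the two set arguments of the density flipped. -/
lemma RminusL_eq (γp : Set X) :
    ∀ (l : List X) (γm : Set X),
      RminusL rm γp γm l = RplusL (fun a b y => rm b a y) γp γm l := by
  intro l
  induction l with
  | nil => intro γm; rfl
  | cons y ys ih => intro γm; simp only [RminusL, RplusL, ih]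

/-- One-point balance, iterated over a list in the `+` slot. -/
lemma BalL
    (hBal : ∀ (γp γm : Set X) (x y : X),
      rp γp (insert y γm) x * rm γp γm y = rm (insert x γp) γm y * rp γp γm x)
    (γm : Set X) (y : X) :
    ∀ (l : List X) (γp : Set X),
      RplusL rp (insert y γm) γp l * rm γp γm y
        = rm (γp ∪ {a | a ∈ l}) γm y * RplusL rp γm γp l := by
  intro l
  induction l with
  | nil =>
      intro γp
      have : γp ∪ {a : X | a ∈ ([] : List X)} = γp := by ext a; simp
      simp [RplusL, this]
  | cons x xs ih =>
      intro γp
      have hset : insert x γp ∪ {a : X | a ∈ xs} = γp ∪ {a : X | a ∈ x :: xs} := by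
        ext a; simp; tauto
      calc rp γp (insert y γm) x * RplusL rp (insert y γm) (insert x γp) xs * rm γp γm y
          = RplusL rp (insert y γm) (insert x γp) xs * (rp γp (insert y γm) x * rm γp γm y) := by
            ring
        _ = RplusL rp (insert y γm) (insert x γp) xs * (rm (insert x γp) γm y * rp γp γm x) := by
            rw [hBal]
        _ = (RplusL rp (insert y γm) (insert x γp) xs * rm (insert x γp) γm y) * rp γp γm x := by
            ring
        _ = (rm (insert x γp ∪ {a | a ∈ xs}) γm y * RplusL rp γm (insert x γp) xs) * rp γp γm x := by
            rw [ih]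
        _ = rm (γp ∪ {a | a ∈ x :: xs}) γm y * (rp γp γm x * RplusL rp γm (insert x γp) xs) := by
            rw [hset]; ring

/-- Full balance: moving a whole `+` configuration past a `−` list. -/
lemma BalLL
    (hBal : ∀ (γp γm : Set X) (x y : X),
      rp γp (insert y γm) x * rm γp γm y = rm (insert x γp) γm y * rp γp γm x)
    (lp : List X) (γp : Set X) :
    ∀ (lm : List X) (γm : Set X),
      RplusL rp (γm ∪ {a | a ∈ lm}) γp lp * RminusL rm γp γm lm
        = RminusL rm (γp ∪ {a | a ∈ lp}) γm lm * RplusL rp γm γp lp := by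
  intro lm
  induction lm with
  | nil =>
      intro γm
      have : γm ∪ {a : X | a ∈ ([] : List X)} = γm := by ext a; simp
      simp [RminusL, this]
  | cons y ys ih =>
      intro γm
      have hset : γm ∪ {a : X | a ∈ y :: ys} = insert y γm ∪ {a : X | a ∈ ys} := by
        ext a; simp; tauto
      calc RplusL rp (γm ∪ {a | a ∈ y :: ys}) γp lp * (rm γp γm y * RminusL rm γp (insert y γm) ys)
          = (RplusL rp (insert y γm ∪ {a | a ∈ ys}) γp lp * RminusL rm γp (insert y γm) ys)
              * rm γp γm y := by rw [hset]; ring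
        _ = (RminusL rm (γp ∪ {a | a ∈ lp}) (insert y γm) ys * RplusL rp (insert y γm) γp lp)
              * rm γp γm y := by rw [ih]
        _ = RminusL rm (γp ∪ {a | a ∈ lp}) (insert y γm) ys
              * (RplusL rp (insert y γm) γp lp * rm γp γm y) := by ring
        _ = RminusL rm (γp ∪ {a | a ∈ lp}) (insert y γm) ys
              * (rm (γp ∪ {a | a ∈ lp}) γm y * RplusL rp γm γp lp) := by
            rw [BalL rp rm hBal γm y lp γp]
        _ = (rm (γp ∪ {a | a ∈ lp}) γm y * RminusL rm (γp ∪ {a | a ∈ lp}) (insert y γm) ys)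
              * RplusL rp γm γp lp := by ring

end Aux

/-- Under (CCI⁺), (CCI⁻) and the balance identity (Bal), for all configurations
`γ⁺, γ⁻`, all disjoint finite configurations `η₁⁺, η₂⁺` and all disjoint finite
configurations `η₁⁻, η₂⁻`:
`R(γ⁺, γ⁻, η₁⁺ ∪ η₂⁺, η₁⁻ ∪ η₂⁻) = R(γ⁺∪η₂⁺, γ⁻∪η₂⁻, η₁⁺, η₁⁻)·R(γ⁺, γ⁻, η₂⁺, η₂⁻)`. -/
theorem R_union_both {X : Type*} [DecidableEq X]
    (rp rm : Set X → Set X → X → ℝ≥0)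
    (hCCIp : ∀ (γp γm : Set X) (x x' : X),
      rp (insert x' γp) γm x * rp γp γm x' = rp (insert x γp) γm x' * rp γp γm x)
    (hCCIm : ∀ (γp γm : Set X) (y y' : X),
      rm γp (insert y' γm) y * rm γp γm y' = rm γp (insert y γm) y' * rm γp γm y)
    (hBal : ∀ (γp γm : Set X) (x y : X),
      rp γp (insert y γm) x * rm γp γm y = rm (insert x γp) γm y * rp γp γm x)
    (γp γm : Set X) (η₁p η₂p η₁m η₂m : Finset X)
    (hdisjp : Disjoint η₁p η₂p) (hdisjm : Disjoint η₁m η₂m) :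
    Rfull rp rm γp γm (η₁p ∪ η₂p) (η₁m ∪ η₂m)
      = Rfull rp rm (γp ∪ ↑η₂p) (γm ∪ ↑η₂m) η₁p η₁m * Rfull rp rm γp γm η₂p η₂m := by
  classical
  have hs1 : {a : X | a ∈ η₂p.toList} = (↑η₂p : Set X) := by ext a; simp
  have hs2 : {a : X | a ∈ η₂m.toList} = (↑η₂m : Set X) := by ext a; simp
  have hs3 : {a : X | a ∈ η₁m.toList} = (↑η₁m : Set X) := by ext a; simp
  have hpermp : (η₁p ∪ η₂p).toList.Perm (η₂p.toList ++ η₁p.toList) := by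
    refine (List.perm_ext_iff_of_nodup (Finset.nodup_toList _) ?_).2 ?_
    · refine List.Nodup.append (Finset.nodup_toList _) (Finset.nodup_toList _) ?_
      intro a ha hb
      exact Finset.disjoint_right.1 hdisjp (by simpa using ha) (by simpa using hb)
    · intro a; simp [Finset.mem_union, or_comm]
  have hpermm : (η₁m ∪ η₂m).toList.Perm (η₂m.toList ++ η₁m.toList) := by
    refine (List.perm_ext_iff_of_nodup (Finset.nodup_toList _) ?_).2 ?_
    · refine List.Nodup.append (Finset.nodup_toList _) (Finset.nodup_toList _) ?_
      intro a ha hb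
      exact Finset.disjoint_right.1 hdisjm (by simpa using ha) (by simpa using hb)
    · intro a; simp [Finset.mem_union, or_comm]
  have hΓ : γm ∪ ↑(η₁m ∪ η₂m) = (γm ∪ ↑η₂m) ∪ {a : X | a ∈ η₁m.toList} := by
    rw [hs3]; ext a; simp [Finset.mem_union]; tauto
  have hCCIm' : ∀ (A B : Set X) (x x' : X),
      (fun a b y => rm b a y) (insert x' A) B x * (fun a b y => rm b a y) A B x'
        = (fun a b y => rm b a y) (insert x A) B x' * (fun a b y => rm b a y) A B x :=
    fun A B x x' => hCCIm B A x x'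
  have e2 : RminusL rm γp γm ((η₁m ∪ η₂m).toList)
      = RminusL rm γp γm (η₂m.toList ++ η₁m.toList) := by
    rw [RminusL_eq, RminusL_eq]
    exact RplusL_perm _ hCCIm' γp hpermm γm
  have e3 : RminusL rm γp γm (η₂m.toList ++ η₁m.toList)
      = RminusL rm γp γm η₂m.toList * RminusL rm γp (γm ∪ ↑η₂m) η₁m.toList := by
    rw [RminusL_eq, RminusL_eq, RminusL_eq, RplusL_append, hs2]
  have hbal := BalLL rp rm hBal η₂p.toList γp η₁m.toList (γm ∪ ↑η₂m)
  rw [hs1] at hbal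
  unfold Rfull Rplus Rminus
  rw [hΓ, RplusL_perm rp hCCIp (γm := (γm ∪ ↑η₂m) ∪ {a : X | a ∈ η₁m.toList}) hpermp γp,
    RplusL_append, hs1]
  rw [e2, e3]
  rw [show ((γm ∪ ↑η₂m : Set X) ∪ ↑η₁m) = (γm ∪ ↑η₂m) ∪ {a : X | a ∈ η₁m.toList} from by
    rw [hs3]]
  have rearr : ∀ a b c d a' d' : ℝ≥0, a * d = d' * a' →
      a * b * (c * d) = b * d' * (a' * c) := by
    intro a b c d a' d' h
    calc a * b * (c * d) = b * c * (a * d) := by ring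
      _ = b * c * (d' * a') := by rw [h]
      _ = b * d' * (a' * c) := by ring
  exact rearr _ _ _ _ _ _ hbal
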